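/- arXiv:2009.06729 — 6 statements merged into one kernel-verified Lean document; each statement's English description precedes it below -/
import Mathlib

section
/- Let W be a locally convex topological vector space over ℝ and V ⊆ W a dense linear subspace. Then every convex function p : V → ℝ that is continuous in the subspace topology of V extends to a continuous function q : W → ℝ with q|_V = p. -/
open Filter Set Topology

/-! A convex function bounded above on one ball of a seminorm `s` is bounded above on every ball
of half the radius, hence (reflecting through the centre) bounded on it, hence `s`-Lipschitz on
the ball of a quarter of the radius. Continuity of `p` at `0` gives such a ball for a continuous
seminorm of the locally convex space `W`. So near each `w ∈ W` the function `p` is uniformly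
`s`-Lipschitz on `V`, its values along `V` at `w` form a Cauchy filter, and `p` extends by
continuity. -/

section ConvexOnSeminormBall

variable {E : Type*} [AddCommGroup E] [Module ℝ E] {s : Seminorm ℝ E} {f : E → ℝ}
  {x₀ : E} {r M : ℝ}

theorem ConvexOn.le_on_seminorm_ball_half (hf : ConvexOn ℝ univ f)
    (hM : ∀ x ∈ s.ball x₀ r, f x ≤ M) (v : E) :
    ∀ x ∈ s.ball v (r / 2), f x ≤ (M + f ((2 : ℝ) • v - x₀)) / 2 := by
  intro x hx
  set a := (2 : ℝ) • x - ((2 : ℝ) • v - x₀)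
  have ha : a ∈ s.ball x₀ r := by
    rw [Seminorm.mem_ball] at hx ⊢
    have : a - x₀ = (2 : ℝ) • (x - v) := by simp only [a]; module
    rw [this, map_smul_eq_mul, Real.norm_two]
    linarith
  have hcomb := hf.2 (mem_univ a) (mem_univ ((2 : ℝ) • v - x₀)) (by norm_num : (0 : ℝ) ≤ 1 / 2)
    (by norm_num : (0 : ℝ) ≤ 1 / 2) (by norm_num)
  have hx_eq : (1 / 2 : ℝ) • a + (1 / 2 : ℝ) • ((2 : ℝ) • v - x₀) = x := by
    simp only [a]; module
  rw [hx_eq, smul_eq_mul, smul_eq_mul] at hcomb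
  linarith [hM a ha]

theorem ConvexOn.abs_sub_le_of_le_on_seminorm_ball (hf : ConvexOn ℝ (s.ball x₀ r) f)
    (hM : ∀ x ∈ s.ball x₀ r, f x ≤ M) : ∀ x ∈ s.ball x₀ r, |f x - f x₀| ≤ M - f x₀ := by
  intro x hx
  set y := (2 : ℝ) • x₀ - x
  have hy : y ∈ s.ball x₀ r := by
    rw [Seminorm.mem_ball] at hx ⊢
    rwa [show y - x₀ = x₀ - x by simp only [y]; module, map_sub_rev]
  have hcomb := hf.2 hx hy (by norm_num : (0 : ℝ) ≤ 1 / 2) (by norm_num : (0 : ℝ) ≤ 1 / 2)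
    (by norm_num)
  rw [show (1 / 2 : ℝ) • x + (1 / 2 : ℝ) • y = x₀ by simp only [y]; module, smul_eq_mul,
    smul_eq_mul] at hcomb
  exact abs_le.2 ⟨by linarith [hM y hy], by linarith [hM x hx]⟩

theorem ConvexOn.sub_le_of_seminorm_sub_lt {ε t : ℝ} (hf : ConvexOn ℝ (s.ball x₀ r) f)
    (hε : 0 < ε) (hM : ∀ a ∈ s.ball x₀ r, |f a - f x₀| ≤ M) {x y : E}
    (hx : x ∈ s.ball x₀ (r - ε)) (hy : y ∈ s.ball x₀ (r - ε)) (ht : s (x - y) < t) :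
    f x - f y ≤ 2 * M / ε * t := by
  have hsub : s.ball x₀ (r - ε) ⊆ s.ball x₀ r := s.ball_mono (by linarith)
  have ht0 : 0 < t := (apply_nonneg s _).trans_lt ht
  -- `z` prolongs the segment from `y` through `x` by an `s`-length of about `ε`
  set z := x + (ε / t) • (x - y)
  have hz : z ∈ s.ball x₀ r := by
    rw [Seminorm.mem_ball] at hx ⊢
    calc s (z - x₀) ≤ s (x - x₀) + s ((ε / t) • (x - y)) := by
          rw [show z - x₀ = (x - x₀) + (ε / t) • (x - y) by simp only [z]; abel]
          exact map_add_le_add s _ _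
      _ < r - ε + ε := by
          rw [map_smul_eq_mul, Real.norm_of_nonneg (by positivity)]
          refine add_lt_add_of_lt_of_le hx ?_
          calc ε / t * s (x - y) ≤ ε / t * t := by gcongr
            _ = ε := by field_simp
      _ = r := by ring
  have hcomb := hf.2 (hsub hy) hz (by positivity : 0 ≤ ε / (ε + t))
    (by positivity : 0 ≤ t / (ε + t)) (by field_simp)
  have hx_eq : (ε / (ε + t)) • y + (t / (ε + t)) • z = x := by
    simp only [z]
    match_scalars <;> field_simp <;> ring
  rw [hx_eq, smul_eq_mul, smul_eq_mul] at hcomb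
  field_simp at hcomb
  have hfz := abs_le.1 (hM z hz)
  have hfx := abs_le.1 (hM x (hsub hx))
  have : t * (f z - f x) ≤ t * (2 * M) := mul_le_mul_of_nonneg_left (by linarith) ht0.le
  rw [div_mul_eq_mul_div, le_div_iff₀ hε]
  linarith

theorem ConvexOn.abs_sub_le_mul_seminorm {ε : ℝ} (hf : ConvexOn ℝ (s.ball x₀ r) f) (hε : 0 < ε)
    (hM : ∀ a ∈ s.ball x₀ r, |f a - f x₀| ≤ M) :
    ∀ x ∈ s.ball x₀ (r - ε), ∀ y ∈ s.ball x₀ (r - ε), |f x - f y| ≤ 2 * M / ε * s (x - y) := by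
  have h : ∀ x ∈ s.ball x₀ (r - ε), ∀ y ∈ s.ball x₀ (r - ε),
      f x - f y ≤ 2 * M / ε * s (x - y) := fun x hx y hy ↦
    ge_of_tendsto (x := 𝓝[>] s (x - y))
      (((continuous_const_mul _).tendsto _).mono_left nhdsWithin_le_nhds)
      (eventually_nhdsWithin_of_forall fun _ ht ↦ hf.sub_le_of_seminorm_sub_lt hε hM hx hy ht)
  intro x hx y hy
  exact abs_sub_le_iff.2 ⟨h x hx y hy, map_sub_rev s x y ▸ h y hy x hx⟩

theorem ConvexOn.exists_abs_sub_le_mul_seminorm (hf : ConvexOn ℝ univ f) (hr : 0 < r)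
    (hM : ∀ x ∈ s.ball x₀ r, f x ≤ M) (v : E) :
    ∃ K, 0 ≤ K ∧ ∀ x ∈ s.ball v (r / 4), ∀ y ∈ s.ball v (r / 4), |f x - f y| ≤ K * s (x - y) := by
  have hup := hf.le_on_seminorm_ball_half hM v
  have habs := (hf.subset (subset_univ _) (s.convex_ball _ _)).abs_sub_le_of_le_on_seminorm_ball
    hup
  have hv : f v ≤ (M + f ((2 : ℝ) • v - x₀)) / 2 := hup v (s.mem_ball_self (by positivity))
  have hlip := (hf.subset (subset_univ _) (s.convex_ball _ _)).abs_sub_le_mul_seminorm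
    (by positivity : 0 < r / 4) habs
  rw [show r / 2 - r / 4 = r / 4 by ring] at hlip
  exact ⟨_, div_nonneg (by linarith) (by positivity), hlip⟩

end ConvexOnSeminormBall

theorem LocallyConvexSpace.exists_continuous_seminorm_ball_subset {E : Type*} [AddCommGroup E]
    [Module ℝ E] [TopologicalSpace E] [IsTopologicalAddGroup E] [ContinuousSMul ℝ E]
    [LocallyConvexSpace ℝ E] {T : Set E} (hT : T ∈ 𝓝 0) :
    ∃ s : Seminorm ℝ E, Continuous s ∧ s.ball 0 1 ⊆ T := by
  obtain ⟨U, ⟨hU0, hUo, hUb, hUc⟩, hUT⟩ := (nhds_hasBasis_absConvex_open ℝ E).mem_iff.1 hT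
  have hball := gaugeSeminorm_ball_one (hs₀ := hUb) (hs₁ := hUc)
    (hs₂ := absorbent_nhds_zero (hUo.mem_nhds hU0)) hUo
  exact ⟨_, Seminorm.continuous (r := 1) (hball ▸ hUo.mem_nhds hU0), hball.symm ▸ hUT⟩

theorem Dense.exists_tendsto_comap_val_nhds {X Y : Type*} [TopologicalSpace X]
    [PseudoMetricSpace Y] [CompleteSpace Y] {S : Set X} (hS : Dense S) {f : S → Y} {w : X}
    (h : ∀ δ > 0, ∃ O ∈ 𝓝 w, ∀ a b : S, (a : X) ∈ O → (b : X) ∈ O → dist (f a) (f b) < δ) :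
    ∃ c, Tendsto f (comap (↑) (𝓝 w)) (𝓝 c) := by
  have := hS.comap_val_nhds_neBot w
  refine CompleteSpace.complete (Metric.cauchy_iff.2 ⟨map_neBot, fun δ hδ ↦ ?_⟩)
  obtain ⟨O, hO, hOf⟩ := h δ hδ
  refine ⟨f '' ((↑) ⁻¹' O), image_mem_map (preimage_mem_comap hO), ?_⟩
  rintro _ ⟨a, ha, rfl⟩ _ ⟨b, hb, rfl⟩
  exact hOf a b ha hb

theorem ConvexOn.exists_mem_nhds_dist_lt {W : Type*} [AddCommGroup W] [Module ℝ W]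
    [TopologicalSpace W] [IsTopologicalAddGroup W] {V : Submodule ℝ W} (hV : Dense (V : Set W))
    {s : Seminorm ℝ W} (hs : Continuous s) {f : V → ℝ} (hf : ConvexOn ℝ univ f) {r M : ℝ}
    (hr : 0 < r) (hM : ∀ v : V, s v < r → f v ≤ M) (w : W) {δ : ℝ} (hδ : 0 < δ) :
    ∃ O ∈ 𝓝 w, ∀ x y : V, (x : W) ∈ O → (y : W) ∈ O → dist (f x) (f y) < δ := by
  have hopen : ∀ η, IsOpen {x : W | s (x - w) < η} := fun η ↦
    isOpen_lt (hs.comp (continuous_id.sub continuous_const)) continuous_const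
  obtain ⟨v, hvV, hvw⟩ := hV.exists_mem_open (hopen (r / 8)) ⟨w, by simpa using hr⟩
  obtain ⟨K, hK, hKf⟩ := hf.exists_abs_sub_le_mul_seminorm (s := s.comp V.subtype) (x₀ := 0) hr
    (fun x hx ↦ hM x (by simpa using hx)) ⟨v, hvV⟩
  set η := min (r / 8) (δ / (2 * K + 1))
  have hnear : ∀ z : V, s (z - w) < η → z ∈ (s.comp V.subtype).ball ⟨v, hvV⟩ (r / 4) := by
    intro z hz
    rw [Seminorm.mem_ball, Seminorm.comp_apply]
    calc s ((z : W) - v) ≤ s ((z : W) - w) + s (v - w) := by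
          rw [map_sub_rev s v]; simpa using map_add_le_add s ((z : W) - w) (w - v)
      _ < r / 8 + r / 8 := add_lt_add (hz.trans_le (min_le_left _ _)) hvw
      _ = r / 4 := by ring
  have hw : w ∈ {x : W | s (x - w) < η} := by
    simp only [mem_ofPred_eq, sub_self, map_zero, η]; positivity
  refine ⟨_, (hopen η).mem_nhds hw, fun x y hx hy ↦ ?_⟩
  rw [Real.dist_eq]
  calc |f x - f y| ≤ K * s ((x : W) - y) := hKf x (hnear x hx) y (hnear y hy)
    _ ≤ K * (2 * (δ / (2 * K + 1))) := by
        gcongr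
        calc s ((x : W) - y) ≤ s ((x : W) - w) + s ((y : W) - w) := by
              rw [map_sub_rev s (y : W)]; simpa using map_add_le_add s ((x : W) - w) (w - y)
          _ ≤ 2 * (δ / (2 * K + 1)) := by
              linarith [(show η ≤ _ from min_le_right _ _), (show s ((x : W) - w) < η from hx),
                (show s ((y : W) - w) < η from hy)]
    _ < δ := by
        rw [← mul_assoc, mul_div_assoc', div_lt_iff₀ (by positivity)]
        linarith

/-- Lemma 5.3: a continuous convex real function on a dense subspace of a locally convex
real topological vector space extends to a continuous function on the whole space. -/
theorem stmt3 {W : Type*} [AddCommGroup W] [Module ℝ W] [TopologicalSpace W]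
    [IsTopologicalAddGroup W] [ContinuousSMul ℝ W] [LocallyConvexSpace ℝ W]
    (V : Submodule ℝ W) (hV : Dense (V : Set W))
    (p : V → ℝ) (hp : ConvexOn ℝ (Set.univ : Set V) p) (hpc : Continuous p) :
    ∃ q : W → ℝ, Continuous q ∧ ∀ v : V, q v = p v := by
  have hdi : IsDenseInducing ((↑) : V → W) := hV.isDenseEmbedding_val.isDenseInducing
  obtain ⟨T, hT, hTp⟩ : ∃ T ∈ 𝓝 (0 : W), ((↑) : V → W) ⁻¹' T ⊆ {v | p v < p 0 + 1} :=
    (mem_nhds_subtype _ _ _).1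
      ((hpc.continuousAt (x := 0)).preimage_mem_nhds (Iio_mem_nhds (lt_add_one _)))
  obtain ⟨s, hs, hsT⟩ := LocallyConvexSpace.exists_continuous_seminorm_ball_subset hT
  have hsp : ∀ v : V, s v < 1 → p v ≤ p 0 + 1 := fun v hv ↦
    (hTp (hsT (s.mem_ball_zero.2 hv))).le
  refine ⟨hdi.extend p, hdi.continuous_extend fun w ↦ hV.exists_tendsto_comap_val_nhds
    fun δ hδ ↦ hp.exists_mem_nhds_dist_lt hV hs one_pos hsp w hδ, hdi.extend_eq hpc⟩
end

section
/- Let (X, μ) be a finite nonatomic measure space and f ∈ L¹(X, μ). Then the function [0, μ(X)] ∋ α ↦ sup{ ∫_E f dμ : E ⊆ X measurable, μ(E) = α } is continuous (taking the value 0 at α = 0). -/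
open MeasureTheory

/-- A measure is nonatomic if every set of positive measure contains a subset of
strictly smaller positive measure. -/
def Nonatomic {X : Type*} [MeasurableSpace X] (μ : Measure X) : Prop :=
  ∀ s : Set X, MeasurableSet s → 0 < μ s →
    ∃ t, t ⊆ s ∧ MeasurableSet t ∧ 0 < μ t ∧ μ t < μ s

/-!
Everything rests on Sierpiński's theorem: a finite nonatomic measure takes every value
`c ∈ [0, μ s]` on measurable subsets of `s`. It is proved by greedy exhaustion, adding at each step
a set of at least half the largest admissible measure; if the union fell short of `c`, a small set of
positive measure fitting into the gap would have been admissible at every step, although the added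
pieces have summable measures. With it, a set of measure `α` can be enlarged or shrunk to one of
measure `β` by adding or removing a set of measure `|β - α|`, so the two suprema differ by at most
the largest `|∫_D f|` over `μ D ≤ |β - α|`, which is small by absolute continuity of the integral.
-/

open Set Filter Topology
open scoped ENNReal

section

theorem ENNReal.exists_mem_forall_le_two_mul {ι : Type*} {S : Set ι} {g : ι → ℝ≥0∞}
    (hS : S.Nonempty) (hg : ⨆ i ∈ S, g i ≠ ∞) : ∃ i ∈ S, ∀ j ∈ S, g j ≤ 2 * g i := by
  rcases eq_or_ne (⨆ i ∈ S, g i) 0 with h0 | h0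
  · obtain ⟨i, hi⟩ := hS
    exact ⟨i, hi, fun j hj => (le_biSup g hj).trans (h0 ▸ zero_le)⟩
  · obtain ⟨i, hi, hlt⟩ := lt_biSup_iff.1 (ENNReal.half_lt_self h0 hg)
    refine ⟨i, hi, fun j hj => (le_biSup g hj).trans ?_⟩
    exact (ENNReal.div_le_iff' two_ne_zero ENNReal.ofNat_ne_top).1 hlt.le

variable {X : Type*} [MeasurableSpace X] {μ : Measure X} {s : Set X}

theorem Nonatomic.exists_subset_measure_pos_le_half (hμ : Nonatomic μ) (hs : MeasurableSet s)
    (hs₀ : 0 < μ s) : ∃ t ⊆ s, MeasurableSet t ∧ 0 < μ t ∧ μ t ≤ μ s / 2 := by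
  obtain ⟨t, hts, ht, ht₀, hlt⟩ := hμ s hs hs₀
  by_cases hle : μ t ≤ μ s / 2
  · exact ⟨t, hts, ht, ht₀, hle⟩
  refine ⟨s \ t, sdiff_subset, hs.diff ht, ?_, ?_⟩ <;>
    rw [measure_sdiff hts ht.nullMeasurableSet hlt.ne_top]
  · exact tsub_pos_of_lt hlt
  · rw [tsub_le_iff_right]
    calc μ s = μ s / 2 + μ s / 2 := (ENNReal.add_halves _).symm
      _ ≤ μ s / 2 + μ t := by gcongr; exact (not_le.1 hle).le

theorem Nonatomic.exists_subset_measure_pos_lt (hμ : Nonatomic μ) (hs : MeasurableSet s)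
    (hs₀ : 0 < μ s) (hs_top : μ s ≠ ∞) {ε : ℝ≥0∞} (hε : 0 < ε) :
    ∃ t ⊆ s, MeasurableSet t ∧ 0 < μ t ∧ μ t < ε := by
  set m := ⨅ t ∈ {t | t ⊆ s ∧ MeasurableSet t ∧ 0 < μ t}, μ t
  have h2m : 2 * m ≤ m := le_iInf₂ fun t ⟨hts, ht, ht₀⟩ => by
    obtain ⟨u, hut, hu, hu₀, hu_half⟩ := hμ.exists_subset_measure_pos_le_half ht ht₀
    calc 2 * m ≤ 2 * μ u := by gcongr; exact iInf₂_le u ⟨hut.trans hts, hu, hu₀⟩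
      _ ≤ μ t := by
        rwa [mul_comm,
          ← ENNReal.le_div_iff_mul_le (Or.inl two_ne_zero) (Or.inl ENNReal.ofNat_ne_top)]
  have hm_top : m ≠ ∞ := ne_top_of_le_ne_top hs_top (iInf₂_le s ⟨subset_rfl, hs, hs₀⟩)
  have hm : m = 0 := by
    rw [two_mul, ← add_zero m] at h2m
    exact le_zero_iff.1 (ENNReal.le_of_add_le_add_left hm_top (by simpa using h2m))
  obtain ⟨t, ⟨hts, ht, ht₀⟩, htε⟩ := lt_biInf_iff.1 (hm ▸ hε)
  exact ⟨t, hts, ht, ht₀, htε⟩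

theorem exists_almost_maximal_extension [IsFiniteMeasure μ] (s : Set X) {t : Set X}
    {c : ℝ≥0∞} (htc : μ t ≤ c) : ∃ u ⊆ s \ t, MeasurableSet u ∧ μ (t ∪ u) ≤ c ∧
      ∀ v ⊆ s \ t, MeasurableSet v → μ (t ∪ v) ≤ c → μ v ≤ 2 * μ u := by
  obtain ⟨u, ⟨hus, hu, huc⟩, hmax⟩ := ENNReal.exists_mem_forall_le_two_mul (g := μ)
    (S := {u | u ⊆ s \ t ∧ MeasurableSet u ∧ μ (t ∪ u) ≤ c}) ⟨∅, by simpa using htc⟩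
    (ne_top_of_le_ne_top (measure_ne_top μ univ)
      (iSup₂_le fun u _ => measure_mono (subset_univ u)))
  exact ⟨u, hus, hu, huc, fun v hvs hv hvc => hmax v ⟨hvs, hv, hvc⟩⟩

theorem Nonatomic.exists_subset_measure_eq [IsFiniteMeasure μ] (hμ : Nonatomic μ)
    (hs : MeasurableSet s) {c : ℝ≥0∞} (hc : c ≤ μ s) : ∃ t ⊆ s, MeasurableSet t ∧ μ t = c := by
  choose! F hFs hF hFc hFmax using
    fun t (htc : μ t ≤ c) => exists_almost_maximal_extension s htc
  set T : ℕ → Set X := fun n => (fun t => t ∪ F t)^[n] ∅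
  have hT_succ (n : ℕ) : T (n + 1) = T n ∪ F (T n) := Function.iterate_succ_apply' _ _ _
  have hT (n : ℕ) : T n ⊆ s ∧ MeasurableSet (T n) ∧ μ (T n) ≤ c ∧
      ∑ i ∈ Finset.range n, μ (F (T i)) = μ (T n) := by
    induction n with
    | zero => simp [T]
    | succ n ih =>
      obtain ⟨hTs, hTm, hTc, hTsum⟩ := ih
      have hunion :=
        measure_union (μ := μ) (disjoint_sdiff_right.mono_right (hFs _ hTc)) (hF _ hTc)
      refine ⟨hT_succ n ▸ union_subset hTs ((hFs _ hTc).trans sdiff_subset),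
        hT_succ n ▸ hTm.union (hF _ hTc), hT_succ n ▸ hFc _ hTc, ?_⟩
      rw [hT_succ, Finset.sum_range_succ, hTsum, hunion]
  have hT_meas (n : ℕ) := (hT n).2.1
  have hT_le (n : ℕ) := (hT n).2.2.1
  have hT_sum (n : ℕ) := (hT n).2.2.2
  have hT_mono : Monotone T := monotone_nat_of_le_succ fun n => hT_succ n ▸ subset_union_left
  set t₀ := ⋃ n, T n
  have ht₀s : t₀ ⊆ s := iUnion_subset fun n => (hT n).1
  have ht₀ : MeasurableSet t₀ := .iUnion hT_meas
  have ht₀c : μ t₀ ≤ c := by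
    rw [hT_mono.measure_iUnion]
    exact iSup_le hT_le
  refine ⟨t₀, ht₀s, ht₀, ht₀c.antisymm ?_⟩
  by_contra! hlt
  have hF_lim : Tendsto (fun n => 2 * μ (F (T n))) atTop (𝓝 0) := by
    simpa using ENNReal.Tendsto.const_mul (ENNReal.tendsto_atTop_zero_of_tsum_ne_top
      (ne_top_of_le_ne_top (measure_ne_top μ s) (ENNReal.tsum_le_of_sum_range_le fun n =>
        hT_sum n ▸ (hT_le n).trans hc))) (Or.inr ENNReal.ofNat_ne_top)
  -- a positive set fitting into the gap `c - μ t₀` was a candidate at every greedy step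
  obtain ⟨u, hus, hu, hu₀, huc⟩ := hμ.exists_subset_measure_pos_lt (hs.diff ht₀)
    (by
      rw [measure_sdiff ht₀s ht₀.nullMeasurableSet (measure_ne_top μ _)]
      exact tsub_pos_of_lt (hlt.trans_le hc))
    (measure_ne_top μ _) (tsub_pos_of_lt hlt)
  have hu_le (n : ℕ) : μ u ≤ 2 * μ (F (T n)) := by
    refine hFmax _ (hT_le n) u
      (hus.trans (sdiff_subset_sdiff_right (subset_iUnion T n))) hu ?_
    calc μ (T n ∪ u) ≤ μ t₀ + μ u :=
          (measure_union_le _ _).trans (by gcongr; exact subset_iUnion T n)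
      _ ≤ μ t₀ + (c - μ t₀) := by gcongr
      _ = c := add_tsub_cancel_of_le hlt.le
  exact hu₀.ne' (le_zero_iff.1 (ge_of_tendsto' hF_lim hu_le))

theorem MeasureTheory.Integrable.exists_pos_forall_abs_setIntegral_lt {f : X → ℝ}
    (hf : Integrable f μ) {ε : ℝ} (hε : 0 < ε) :
    ∃ δ > 0, ∀ s, μ s < ENNReal.ofReal δ → |∫ x in s, f x ∂μ| < ε := by
  obtain ⟨η, hη, hsmall⟩ :=
    ((ENNReal.nhds_zero_basis.comap μ).tendsto_iff Metric.nhds_basis_ball).1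
      (hf.tendsto_setIntegral_nhds_zero (l := comap μ (𝓝 0)) (s := id) tendsto_comap) ε hε
  obtain ⟨δ, -, hδ, hδη⟩ := ENNReal.lt_iff_exists_real_btwn.1 hη
  refine ⟨δ, ENNReal.ofReal_pos.1 hδ, fun s hs => ?_⟩
  simpa using hsmall s (hs.trans hδη)

noncomputable def supSetIntegral (μ : Measure X) (f : X → ℝ) (α : ℝ) : ℝ :=
  sSup {r : ℝ | ∃ E : Set X, MeasurableSet E ∧ μ E = ENNReal.ofReal α ∧ r = ∫ x in E, f x ∂μ}

variable {f : X → ℝ} {α β ε : ℝ}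

theorem le_supSetIntegral (hf : Integrable f μ) {E : Set X} (hE : MeasurableSet E)
    (hEα : μ E = ENNReal.ofReal α) : ∫ x in E, f x ∂μ ≤ supSetIntegral μ f α := by
  refine le_csSup ⟨∫ x, |f x| ∂μ, ?_⟩ ⟨E, hE, hEα, rfl⟩
  rintro r ⟨D, -, -, rfl⟩
  calc ∫ x in D, f x ∂μ ≤ ∫ x in D, |f x| ∂μ :=
        setIntegral_mono hf.integrableOn hf.abs.integrableOn fun x => le_abs_self _
    _ ≤ ∫ x, |f x| ∂μ := setIntegral_le_integral hf.abs (.of_forall fun x => abs_nonneg _)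

theorem supSetIntegral_le [IsFiniteMeasure μ] (hμ : Nonatomic μ) (hα : α ≤ (μ univ).toReal)
    {b : ℝ} (h : ∀ E, MeasurableSet E → μ E = ENNReal.ofReal α → ∫ x in E, f x ∂μ ≤ b) :
    supSetIntegral μ f α ≤ b := by
  obtain ⟨E, -, hE, hEα⟩ :=
    hμ.exists_subset_measure_eq .univ (ENNReal.ofReal_le_of_le_toReal hα)
  refine csSup_le ⟨_, E, hE, hEα, rfl⟩ ?_
  rintro r ⟨E, hE, hEα, rfl⟩
  exact h E hE hEα

theorem supSetIntegral_le_add_of_le [IsFiniteMeasure μ] (hμ : Nonatomic μ) (hf : Integrable f μ)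
    (hα : 0 ≤ α) (hαβ : α ≤ β) (hβ : β ≤ (μ univ).toReal)
    (hsmall : ∀ D, MeasurableSet D → μ D ≤ ENNReal.ofReal (β - α) → |∫ x in D, f x ∂μ| ≤ ε) :
    supSetIntegral μ f α ≤ supSetIntegral μ f β + ε := by
  refine supSetIntegral_le hμ (hαβ.trans hβ) fun E hE hEα => ?_
  have hEc : ENNReal.ofReal (β - α) ≤ μ Eᶜ := by
    rw [measure_compl hE (measure_ne_top μ E), hEα, ENNReal.ofReal_sub _ hα]
    exact tsub_le_tsub_right (ENNReal.ofReal_le_of_le_toReal hβ) _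
  obtain ⟨D, hDE, hD, hDμ⟩ := hμ.exists_subset_measure_eq hE.compl hEc
  have hED : Disjoint E D := disjoint_compl_right.mono_right hDE
  have hEDμ : μ (E ∪ D) = ENNReal.ofReal β := by
    rw [measure_union hED hD, hEα, hDμ, ← ENNReal.ofReal_add hα (sub_nonneg.2 hαβ),
      add_sub_cancel]
  have hsplit := setIntegral_union hED hD hf.integrableOn hf.integrableOn (f := f)
  have := le_supSetIntegral hf (hE.union hD) hEDμ
  linarith [neg_abs_le (∫ x in D, f x ∂μ), hsmall D hD hDμ.le]

theorem supSetIntegral_le_add_of_ge [IsFiniteMeasure μ] (hμ : Nonatomic μ) (hf : Integrable f μ)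
    (hα : 0 ≤ α) (hαβ : α ≤ β) (hβ : β ≤ (μ univ).toReal)
    (hsmall : ∀ D, MeasurableSet D → μ D ≤ ENNReal.ofReal (β - α) → |∫ x in D, f x ∂μ| ≤ ε) :
    supSetIntegral μ f β ≤ supSetIntegral μ f α + ε := by
  refine supSetIntegral_le hμ hβ fun E hE hEβ => ?_
  obtain ⟨D, hDE, hD, hDμ⟩ :=
    hμ.exists_subset_measure_eq hE (hEβ ▸ ENNReal.ofReal_le_ofReal hαβ)
  have hEDμ : μ (E \ D) ≤ ENNReal.ofReal (β - α) := by
    rw [measure_sdiff hDE hD.nullMeasurableSet (measure_ne_top μ D), hEβ, hDμ,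
      ENNReal.ofReal_sub _ hα]
  have hsplit : ∫ x in E, f x ∂μ = ∫ x in D, f x ∂μ + ∫ x in E \ D, f x ∂μ := by
    rw [← setIntegral_union disjoint_sdiff_right (hE.diff hD) hf.integrableOn hf.integrableOn,
      union_sdiff_cancel hDE]
  have := le_supSetIntegral hf hD hDμ
  linarith [le_abs_self (∫ x in E \ D, f x ∂μ), hsmall _ (hE.diff hD) hEDμ]

theorem dist_supSetIntegral_le [IsFiniteMeasure μ] (hμ : Nonatomic μ) (hf : Integrable f μ)
    (hα : α ∈ Icc 0 (μ univ).toReal) (hβ : β ∈ Icc 0 (μ univ).toReal)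
    (hsmall : ∀ D, MeasurableSet D → μ D ≤ ENNReal.ofReal (dist α β) →
      |∫ x in D, f x ∂μ| ≤ ε) :
    dist (supSetIntegral μ f α) (supSetIntegral μ f β) ≤ ε := by
  wlog hαβ : α ≤ β generalizing α β
  · rw [dist_comm]
    exact this hβ hα (fun D hD hDμ => hsmall D hD (dist_comm α β ▸ hDμ)) (le_of_not_ge hαβ)
  rw [Real.dist_eq α β, abs_sub_comm, abs_of_nonneg (sub_nonneg.2 hαβ)] at hsmall
  rw [Real.dist_eq, abs_sub_le_iff]
  constructor
  · linarith [supSetIntegral_le_add_of_le hμ hf hα.1 hαβ hβ.2 hsmall]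
  · linarith [supSetIntegral_le_add_of_ge hμ hf hα.1 hαβ hβ.2 hsmall]

end

theorem stmt5_general {X : Type*} [MeasurableSpace X] (μ : Measure X) [IsFiniteMeasure μ]
    (hμ : Nonatomic μ) (f : X → ℝ) (hfi : Integrable f μ) :
    ContinuousOn
      (fun α : ℝ => sSup {r : ℝ | ∃ E : Set X, MeasurableSet E ∧
        μ E = ENNReal.ofReal α ∧ r = ∫ x in E, f x ∂μ})
      (Set.Icc 0 (μ Set.univ).toReal) := by
  change ContinuousOn (supSetIntegral μ f) _
  refine Metric.continuousOn_iff.2 fun b hb ε hε => ?_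
  obtain ⟨δ, hδ, hsmall⟩ := hfi.exists_pos_forall_abs_setIntegral_lt (half_pos hε)
  refine ⟨δ, hδ, fun a ha hab => (dist_supSetIntegral_le hμ hfi ha hb fun D _ hD =>
    (hsmall D (hD.trans_lt ?_)).le).trans_lt (half_lt_self hε)⟩
  rwa [ENNReal.ofReal_lt_ofReal_iff hδ]

/-- The function `α ↦ sup{∫_E f dμ : E measurable, μ E = α}` is continuous on
`[0, μ(X)]` (at `α = 0` its value is `0`, since only null sets occur there). -/
theorem stmt5 {X : Type*} [MeasurableSpace X] (μ : Measure X) [IsFiniteMeasure μ]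
    (hμ : Nonatomic μ) (f : X → ℝ) (hf : Measurable f) (hfi : Integrable f μ) :
    ContinuousOn
      (fun α : ℝ => sSup {r : ℝ | ∃ E : Set X, MeasurableSet E ∧
        μ E = ENNReal.ofReal α ∧ r = ∫ x in E, f x ∂μ})
      (Set.Icc 0 (μ Set.univ).toReal) :=
  stmt5_general μ hμ f hfi
end

section
/- Let X be a compact metric space and μ a finite Borel measure on X. Let B(X) denote the space of bounded Borel functions X → ℝ and C(X) the space of continuous functions X → ℝ. If p : C(X) → ℝ is convex and strongly continuous, then there exists a unique strongly continuous function q : B(X) → ℝ with q = p on C(X), and this q is convex. -/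
/-!
Every bounded Borel function `f` is the a.e. limit of a uniformly bounded sequence of continuous
functions: approximate in `L¹`, pass to an a.e. convergent subsequence and clip. Interleaving two
such sequences gives a third one, so strong continuity of `p` forces a common limit of `p` along
all of them; this limit is the extension `q`. Convexity passes to the limit, and interleaving an
approximating sequence with the constant sequence `f` gives uniqueness. Strong continuity of `q`
is a diagonal argument: for `η k → f` a.e., choose continuous `ζ k` close to `η k` in measure with
summable error, so that `ζ k → f` a.e. by Borel–Cantelli, and with `p (ζ k)` close to `q (η k)`.
-/

open MeasureTheory Filter Topology

/-- A real-valued function `p`, viewed on the domain `D` of functions `X → ℝ`, is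
strongly continuous if `(p (ξ k))` converges whenever `(ξ k)` is a uniformly bounded
sequence in `D` converging `μ`-almost everywhere. -/
def StronglyContinuousOn {X : Type*} [MeasurableSpace X] (μ : Measure X)
    (D : Set (X → ℝ)) (p : (X → ℝ) → ℝ) : Prop :=
  ∀ ξ : ℕ → X → ℝ, (∀ k, ξ k ∈ D) → (∃ C : ℝ, ∀ k x, |ξ k x| ≤ C) →
    (∀ᵐ x ∂μ, ∃ l : ℝ, Tendsto (fun k => ξ k x) atTop (𝓝 l)) →
    ∃ L : ℝ, Tendsto (fun k => p (ξ k)) atTop (𝓝 L)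

open scoped ENNReal

section Interleave

variable {α β : Type*}

def interleave (u v : ℕ → α) (k : ℕ) : α := if Even k then u (k / 2) else v (k / 2)

@[simp]
theorem interleave_two_mul (u v : ℕ → α) (j : ℕ) : interleave u v (2 * j) = u j := by
  simp [interleave]

@[simp]
theorem interleave_two_mul_add_one (u v : ℕ → α) (j : ℕ) :
    interleave u v (2 * j + 1) = v j := by
  simp [interleave, Nat.add_div_of_dvd_right]

theorem comp_interleave (g : α → β) (u v : ℕ → α) :
    (fun k => g (interleave u v k)) = interleave (fun k => g (u k)) (fun k => g (v k)) := by
  ext k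
  unfold interleave
  split_ifs <;> rfl

theorem interleave_mem {s : Set α} {u v : ℕ → α} (hu : ∀ k, u k ∈ s) (hv : ∀ k, v k ∈ s)
    (k : ℕ) : interleave u v k ∈ s := by
  unfold interleave
  split_ifs
  exacts [hu _, hv _]

theorem tendsto_interleave_iff {u v : ℕ → α} {l : Filter α} :
    Tendsto (interleave u v) atTop l ↔ Tendsto u atTop l ∧ Tendsto v atTop l := by
  have h2 : Tendsto (fun j : ℕ => 2 * j) atTop atTop :=
    tendsto_id.const_mul_atTop' (by norm_num)
  refine ⟨fun h => ⟨?_, ?_⟩, fun ⟨hu, hv⟩ => ?_⟩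
  · simpa [Function.comp_def] using h.comp h2
  · simpa [Function.comp_def] using h.comp (tendsto_add_atTop_nat 1 |>.comp h2)
  · have hdiv : Tendsto (· / 2) atTop atTop := Nat.tendsto_div_const_atTop two_ne_zero
    exact ((hu.comp hdiv).mono_left inf_le_left).if ((hv.comp hdiv).mono_left inf_le_left)

end Interleave

section BoundedAETendsto

variable {X : Type*} [MeasurableSpace X] {μ : Measure X}

def BoundedAETendsto (μ : Measure X) (ξ : ℕ → X → ℝ) (f : X → ℝ) : Prop :=
  (∃ C : ℝ, ∀ k x, |ξ k x| ≤ C) ∧ ∀ᵐ x ∂μ, Tendsto (fun k => ξ k x) atTop (𝓝 (f x))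

theorem stronglyContinuousOn_iff {D : Set (X → ℝ)} {p : (X → ℝ) → ℝ} :
    StronglyContinuousOn μ D p ↔ ∀ (ξ : ℕ → X → ℝ) (f : X → ℝ), (∀ k, ξ k ∈ D) →
      BoundedAETendsto μ ξ f → ∃ L : ℝ, Tendsto (fun k => p (ξ k)) atTop (𝓝 L) := by
  refine ⟨fun hp ξ f hξD ⟨hb, hf⟩ => hp ξ hξD hb (hf.mono fun x hx => ⟨f x, hx⟩),
    fun hp ξ hξD hb hconv => hp ξ (fun x => limUnder atTop fun k => ξ k x) hξD ⟨hb, ?_⟩⟩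
  filter_upwards [hconv] with x ⟨l, hl⟩
  exact hl.limUnder_eq.symm ▸ hl

theorem BoundedAETendsto.const {f : X → ℝ} (hf : ∃ M : ℝ, ∀ x, |f x| ≤ M) :
    BoundedAETendsto μ (fun _ => f) f :=
  ⟨hf.imp fun _ hM _ => hM, ae_of_all _ fun _ => tendsto_const_nhds⟩

theorem BoundedAETendsto.interleave {ξ ζ : ℕ → X → ℝ} {f : X → ℝ}
    (hξ : BoundedAETendsto μ ξ f) (hζ : BoundedAETendsto μ ζ f) :
    BoundedAETendsto μ (interleave ξ ζ) f := by
  obtain ⟨⟨C, hC⟩, hξf⟩ := hξ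
  obtain ⟨⟨C', hC'⟩, hζf⟩ := hζ
  refine ⟨⟨max C C', fun k x => ?_⟩, ?_⟩
  · unfold _root_.interleave
    split_ifs
    exacts [(hC _ x).trans (le_max_left _ _), (hC' _ x).trans (le_max_right _ _)]
  · filter_upwards [hξf, hζf] with x hξx hζx
    convert tendsto_interleave_iff.2 ⟨hξx, hζx⟩ using 1
    exact comp_interleave (fun g : X → ℝ => g x) ξ ζ

theorem BoundedAETendsto.const_smul {ξ : ℕ → X → ℝ} {f : X → ℝ} (hξ : BoundedAETendsto μ ξ f)
    (c : ℝ) : BoundedAETendsto μ (fun k => c • ξ k) (c • f) := by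
  obtain ⟨⟨C, hC⟩, hξf⟩ := hξ
  refine ⟨⟨|c| * C, fun k x => ?_⟩, hξf.mono fun x hx => hx.const_mul c⟩
  simpa only [Pi.smul_apply, smul_eq_mul, abs_mul] using
    mul_le_mul_of_nonneg_left (hC k x) (abs_nonneg c)

theorem BoundedAETendsto.add {ξ ζ : ℕ → X → ℝ} {f g : X → ℝ} (hξ : BoundedAETendsto μ ξ f)
    (hζ : BoundedAETendsto μ ζ g) : BoundedAETendsto μ (fun k => ξ k + ζ k) (f + g) := by
  obtain ⟨⟨C, hC⟩, hξf⟩ := hξ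
  obtain ⟨⟨C', hC'⟩, hζg⟩ := hζ
  refine ⟨⟨C + C', fun k x => (abs_add_le _ _).trans (add_le_add (hC k x) (hC' k x))⟩, ?_⟩
  filter_upwards [hξf, hζg] with x hξx hζx
  exact hξx.add hζx

theorem StronglyContinuousOn.tendsto_of_boundedAETendsto {D : Set (X → ℝ)}
    {p : (X → ℝ) → ℝ} (hp : StronglyContinuousOn μ D p) {ξ ζ : ℕ → X → ℝ} {f : X → ℝ}
    (hξD : ∀ k, ξ k ∈ D) (hζD : ∀ k, ζ k ∈ D) (hξ : BoundedAETendsto μ ξ f)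
    (hζ : BoundedAETendsto μ ζ f) {L : ℝ} (hL : Tendsto (fun k => p (ξ k)) atTop (𝓝 L)) :
    Tendsto (fun k => p (ζ k)) atTop (𝓝 L) := by
  obtain ⟨L', hL'⟩ := stronglyContinuousOn_iff.1 hp _ f (interleave_mem hξD hζD)
    (hξ.interleave hζ)
  rw [comp_interleave, tendsto_interleave_iff] at hL'
  exact tendsto_nhds_unique hL'.1 hL ▸ hL'.2

end BoundedAETendsto

section Approximation

variable {X : Type*} [TopologicalSpace X] [NormalSpace X] [MeasurableSpace X] [BorelSpace X]
  {μ : Measure X} [μ.WeaklyRegular]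

theorem MeasureTheory.MemLp.exists_seq_continuous_ae_tendsto {f : X → ℝ} (hf : MemLp f 1 μ) :
    ∃ g : ℕ → X → ℝ, (∀ n, Continuous (g n)) ∧
      ∀ᵐ x ∂μ, Tendsto (fun n => g n x) atTop (𝓝 (f x)) := by
  have hε : ∀ n : ℕ, (n : ℝ≥0∞)⁻¹ ≠ 0 := fun n => ENNReal.inv_ne_zero.2 (ENNReal.natCast_ne_top n)
  choose g hg using fun n => hf.exists_boundedContinuous_eLpNorm_sub_le ENNReal.one_ne_top (hε n)
  have hmeas : TendstoInMeasure μ (fun n => ⇑(g n)) atTop f := by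
    refine tendstoInMeasure_of_tendsto_eLpNorm one_ne_zero
      (fun n => (g n).continuous.aestronglyMeasurable) hf.aestronglyMeasurable ?_
    refine tendsto_of_tendsto_of_tendsto_of_le_of_le tendsto_const_nhds
      ENNReal.tendsto_inv_nat_nhds_zero (fun _ => zero_le) fun n => ?_
    simpa only [eLpNorm_sub_comm] using (hg n).1
  obtain ⟨ns, -, hns⟩ := hmeas.exists_seq_tendsto_ae
  exact ⟨fun n => g (ns n), fun n => (g (ns n)).continuous, hns⟩

variable [IsFiniteMeasure μ]

theorem exists_seq_continuous_abs_le_ae_tendsto {f : X → ℝ} (hf : Measurable f)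
    {M : ℝ} (hM : ∀ x, |f x| ≤ M) :
    ∃ ξ : ℕ → X → ℝ, (∀ k, Continuous (ξ k)) ∧ (∀ k x, |ξ k x| ≤ M) ∧
      ∀ᵐ x ∂μ, Tendsto (fun k => ξ k x) atTop (𝓝 (f x)) := by
  obtain ⟨g, hgc, hg⟩ := (MemLp.of_bound (μ := μ) hf.aestronglyMeasurable M
    (ae_of_all _ fun x => (Real.norm_eq_abs _).trans_le (hM x))).exists_seq_continuous_ae_tendsto
  let clip : ℝ → ℝ := fun t => max (-M) (min M t)
  have hclip_cont : Continuous clip := continuous_const.max (continuous_const.min continuous_id)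
  have hclip_eq : ∀ x, clip (f x) = f x := fun x => by
    obtain ⟨hlo, hhi⟩ := abs_le.1 (hM x)
    simp only [clip, min_eq_right hhi, max_eq_right hlo]
  refine ⟨fun k x => clip (g k x), fun k => hclip_cont.comp (hgc k), fun k x => ?_, ?_⟩
  · have hM₀ : 0 ≤ M := (abs_nonneg _).trans (hM x)
    exact abs_le.2 ⟨le_max_left _ _, max_le (by linarith) (min_le_left _ _)⟩
  · filter_upwards [hg] with x hx
    have := (hclip_cont.tendsto (f x)).comp hx
    rwa [hclip_eq] at this

end Approximation

theorem exists_diagonal_ae_tendsto_dist_zero {X E : Type*} [MeasurableSpace X]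
    [PseudoMetricSpace E] {μ : Measure X} [IsFiniteMeasure μ] {ζ : ℕ → ℕ → X → E}
    {η : ℕ → X → E} (hζm : ∀ k j, AEStronglyMeasurable (ζ k j) μ)
    (hζ : ∀ k, ∀ᵐ x ∂μ, Tendsto (fun j => ζ k j x) atTop (𝓝 (η k x)))
    {P : ℕ → ℕ → Prop} (hP : ∀ k, ∀ᶠ j in atTop, P k j) :
    ∃ n : ℕ → ℕ, (∀ k, P k (n k)) ∧
      ∀ᵐ x ∂μ, Tendsto (fun k => dist (ζ k (n k) x) (η k x)) atTop (𝓝 0) := by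
  have hsmall : ∀ k : ℕ, ∀ᶠ j in atTop,
      μ {x | 1 / ((k : ℝ) + 1) ≤ dist (ζ k j x) (η k x)} ≤ 2⁻¹ ^ k := fun k =>
    (tendstoInMeasure_iff_dist.1 (tendstoInMeasure_of_tendsto_ae (hζm k) (hζ k)) _
      (by positivity)).eventually_le_const (ENNReal.pow_pos (by norm_num) k)
  choose n hn using fun k => ((hsmall k).and (hP k)).exists
  refine ⟨n, fun k => (hn k).2, ?_⟩
  have hsum : ∑' k : ℕ, μ {x | 1 / ((k : ℝ) + 1) ≤ dist (ζ k (n k) x) (η k x)} ≠ ∞ :=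
    ne_top_of_le_ne_top (by simp [ENNReal.tsum_geometric])
      (ENNReal.tsum_le_tsum fun k => (hn k).1)
  filter_upwards [ae_eventually_notMem hsum] with x hx
  exact squeeze_zero' (Eventually.of_forall fun _ => dist_nonneg)
    (hx.mono fun _ hk => (not_le.1 hk).le) tendsto_one_div_add_atTop_nhds_zero_nat

section Extension

variable {X : Type*} [MeasurableSpace X]

def boundedMeasurable (X : Type*) [MeasurableSpace X] : Set (X → ℝ) :=
  {f | Measurable f ∧ ∃ M : ℝ, ∀ x, |f x| ≤ M}

theorem convex_boundedMeasurable : Convex ℝ (boundedMeasurable X) := by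
  rintro f ⟨hf, M, hM⟩ g ⟨hg, N, hN⟩ a b ha hb -
  refine ⟨(hf.const_smul a).add (hg.const_smul b), a * M + b * N, fun x => ?_⟩
  calc |a * f x + b * g x| ≤ |a * f x| + |b * g x| := abs_add_le _ _
    _ = a * |f x| + b * |g x| := by rw [abs_mul, abs_mul, abs_of_nonneg ha, abs_of_nonneg hb]
    _ ≤ a * M + b * N := by gcongr; exacts [hM x, hN x]

variable [TopologicalSpace X]

noncomputable def borelExtension (μ : Measure X) (p : (X → ℝ) → ℝ) (f : X → ℝ) : ℝ :=
  Classical.epsilon fun L => ∀ ξ : ℕ → X → ℝ, (∀ k, Continuous (ξ k)) →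
    BoundedAETendsto μ ξ f → Tendsto (fun k => p (ξ k)) atTop (𝓝 L)

variable [NormalSpace X] [BorelSpace X] {μ : Measure X} [IsFiniteMeasure μ] [μ.WeaklyRegular]
  {p : (X → ℝ) → ℝ}

theorem exists_continuous_boundedAETendsto {f : X → ℝ} (hf : f ∈ boundedMeasurable X) :
    ∃ ξ : ℕ → X → ℝ, (∀ k, Continuous (ξ k)) ∧ BoundedAETendsto μ ξ f := by
  obtain ⟨hfm, M, hM⟩ := hf
  obtain ⟨ξ, hξc, hξM, hξf⟩ := exists_seq_continuous_abs_le_ae_tendsto (μ := μ) hfm hM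
  exact ⟨ξ, hξc, ⟨M, hξM⟩, hξf⟩

theorem StronglyContinuousOn.exists_tendsto_of_mem_boundedMeasurable
    (hp : StronglyContinuousOn μ {f | Continuous f} p) {f : X → ℝ}
    (hf : f ∈ boundedMeasurable X) :
    ∃ L : ℝ, ∀ ξ : ℕ → X → ℝ, (∀ k, Continuous (ξ k)) →
      BoundedAETendsto μ ξ f → Tendsto (fun k => p (ξ k)) atTop (𝓝 L) := by
  obtain ⟨ξ₀, hξ₀c, hξ₀⟩ := exists_continuous_boundedAETendsto (μ := μ) hf
  obtain ⟨L, hL⟩ := stronglyContinuousOn_iff.1 hp ξ₀ f hξ₀c hξ₀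
  exact ⟨L, fun ξ hξc hξ => hp.tendsto_of_boundedAETendsto hξ₀c hξc hξ₀ hξ hL⟩

theorem tendsto_borelExtension (hp : StronglyContinuousOn μ {f | Continuous f} p)
    {f : X → ℝ} (hf : f ∈ boundedMeasurable X) {ξ : ℕ → X → ℝ} (hξc : ∀ k, Continuous (ξ k))
    (hξ : BoundedAETendsto μ ξ f) :
    Tendsto (fun k => p (ξ k)) atTop (𝓝 (borelExtension μ p f)) :=
  Classical.epsilon_spec (hp.exists_tendsto_of_mem_boundedMeasurable hf) ξ hξc hξ

theorem borelExtension_eq_of_continuous (hp : StronglyContinuousOn μ {f | Continuous f} p)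
    {f : X → ℝ} (hfc : Continuous f) (hfb : ∃ M : ℝ, ∀ x, |f x| ≤ M) :
    borelExtension μ p f = p f :=
  tendsto_nhds_unique (tendsto_borelExtension hp ⟨hfc.measurable, hfb⟩ (fun _ => hfc)
    (.const hfb)) tendsto_const_nhds

theorem convexOn_borelExtension (hpc : ConvexOn ℝ {f | Continuous f} p)
    (hp : StronglyContinuousOn μ {f | Continuous f} p) :
    ConvexOn ℝ (boundedMeasurable X) (borelExtension μ p) := by
  refine ⟨convex_boundedMeasurable, fun f hf g hg a b ha hb hab => ?_⟩
  obtain ⟨ξ, hξc, hξ⟩ := exists_continuous_boundedAETendsto (μ := μ) hf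
  obtain ⟨ζ, hζc, hζ⟩ := exists_continuous_boundedAETendsto (μ := μ) hg
  have hlhs := tendsto_borelExtension hp (convex_boundedMeasurable hf hg ha hb hab)
    (fun k => ((hξc k).const_smul a).add ((hζc k).const_smul b))
    ((hξ.const_smul a).add (hζ.const_smul b))
  have hrhs := ((tendsto_borelExtension hp hf hξc hξ).const_smul a).add
    ((tendsto_borelExtension hp hg hζc hζ).const_smul b)
  exact le_of_tendsto_of_tendsto' hlhs hrhs fun k => hpc.2 (hξc k) (hζc k) ha hb hab

theorem stronglyContinuousOn_borelExtension (hp : StronglyContinuousOn μ {f | Continuous f} p) :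
    StronglyContinuousOn μ (boundedMeasurable X) (borelExtension μ p) := by
  refine stronglyContinuousOn_iff.2 fun η f hη hηf => ?_
  obtain ⟨⟨C, hC⟩, hηf⟩ := hηf
  choose ζ hζc hζC hζη using fun k =>
    exists_seq_continuous_abs_le_ae_tendsto (μ := μ) (hη k).1 (hC k)
  have hclose : ∀ k, ∀ᶠ j in atTop,
      dist (p (ζ k j)) (borelExtension μ p (η k)) < 1 / ((k : ℝ) + 1) := fun k =>
    (tendsto_borelExtension hp (hη k) (hζc k) ⟨⟨C, hζC k⟩, hζη k⟩).eventually
      (Metric.ball_mem_nhds _ (by positivity))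
  obtain ⟨n, hn, hdist⟩ := exists_diagonal_ae_tendsto_dist_zero
    (fun k j => (hζc k j).aestronglyMeasurable) hζη hclose
  have hdiag : BoundedAETendsto μ (fun k => ζ k (n k)) f := by
    refine ⟨⟨C, fun k => hζC k (n k)⟩, ?_⟩
    filter_upwards [hηf, hdist] with x hηx hx
    exact hηx.congr_dist (by simpa only [dist_comm] using hx)
  obtain ⟨L, hL⟩ := stronglyContinuousOn_iff.1 hp _ f (fun k => hζc k (n k)) hdiag
  exact ⟨L, hL.congr_dist (squeeze_zero (fun _ => dist_nonneg) (fun k => (hn k).le)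
    tendsto_one_div_add_atTop_nhds_zero_nat)⟩

theorem StronglyContinuousOn.eq_borelExtension (hp : StronglyContinuousOn μ {f | Continuous f} p)
    {q : (X → ℝ) → ℝ} (hq : StronglyContinuousOn μ (boundedMeasurable X) q)
    (hqp : ∀ g : X → ℝ, Continuous g → (∃ M : ℝ, ∀ x, |g x| ≤ M) → q g = p g)
    {f : X → ℝ} (hf : f ∈ boundedMeasurable X) : q f = borelExtension μ p f := by
  obtain ⟨ξ, hξc, hξ⟩ := exists_continuous_boundedAETendsto (μ := μ) hf
  obtain ⟨C, hC⟩ := hξ.1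
  have hqξ : Tendsto (fun k => q (ξ k)) atTop (𝓝 (borelExtension μ p f)) := by
    simpa only [hqp _ (hξc _) ⟨C, hC _⟩] using tendsto_borelExtension hp hf hξc hξ
  exact tendsto_nhds_unique tendsto_const_nhds <| hq.tendsto_of_boundedAETendsto
    (fun k => ⟨(hξc k).measurable, C, hC k⟩) (fun _ => hf) hξ (.const hf.2) hqξ

end Extension

/-- Theorem 5.2 (second half): a convex, strongly continuous `p` on `C(X)` extends
uniquely to a strongly continuous `q` on the bounded Borel functions `B(X)`, and the
extension is convex. -/
theorem stmt7 {X : Type*} [MetricSpace X] [CompactSpace X] [MeasurableSpace X]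
    [BorelSpace X] (μ : Measure X) [IsFiniteMeasure μ]
    (C : Set (X → ℝ)) (hC : C = {f : X → ℝ | Continuous f})
    (B : Set (X → ℝ)) (hB : B = {f : X → ℝ | Measurable f ∧ ∃ M : ℝ, ∀ x, |f x| ≤ M})
    (p : (X → ℝ) → ℝ)
    (hpconv : ConvexOn ℝ C p)
    (hpsc : StronglyContinuousOn μ C p) :
    ∃ q : (X → ℝ) → ℝ,
      (StronglyContinuousOn μ B q ∧ (∀ f ∈ C, q f = p f) ∧ ConvexOn ℝ B q) ∧
      ∀ q' : (X → ℝ) → ℝ, StronglyContinuousOn μ B q' → (∀ f ∈ C, q' f = p f) →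
        ∀ f ∈ B, q' f = q f := by
  subst hC hB
  have hbdd : ∀ f : X → ℝ, Continuous f → ∃ M : ℝ, ∀ x, |f x| ≤ M := fun f hf =>
    (isCompact_univ.exists_bound_of_continuousOn hf.continuousOn).imp fun _ hM x =>
      hM x (Set.mem_univ x)
  exact ⟨borelExtension μ p,
    ⟨stronglyContinuousOn_borelExtension hpsc,
      fun f hf => borelExtension_eq_of_continuous hpsc hf (hbdd f hf),
      convexOn_borelExtension hpconv hpsc⟩,
    fun q hq hqp _ hf => hpsc.eq_borelExtension hq (fun g hg _ => hqp g hg) hf⟩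
end

section
/- Let X be a compact connected topological space and μ a finite Borel measure on X with μ(X) > 0 such that μ(U) > 0 for every nonempty open set U ⊆ X. Then for every continuous function ξ : X → ℝ there exists a continuous nonincreasing function ξ⋆ : [0, μ(X)] → ℝ that is equidistributed with ξ, i.e., the pushforward of Lebesgue measure on [0, μ(X)] under ξ⋆ equals the pushforward of μ under ξ. -/
open MeasureTheory Set Filter Topology

/-!
Let `ν = ξ_* μ`, `F t = ν (-∞, t]` and `M = μ(X)`. The rearrangement is `ξ⋆ s = Q (M - s)`,
where `Q` is the quantile function of `ν`. Right-continuity of `F` gives the Galois property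
`Q σ ≤ t ↔ σ ≤ F t`, so `{s | ξ⋆ s ≤ t}` is an interval of length `F t` and `ξ⋆` pushes
Lebesgue measure forward to `ν`. Since `X` is connected, `ξ(X) = [min ξ, max ξ]`, and since `μ`
charges nonempty open sets, `F` is strictly increasing on that interval; hence `Q` maps
`[0, M]` monotonically onto `[min ξ, max ξ]`, and is therefore continuous.
-/

theorem MonotoneOn.continuousOn_of_surjOn {α β : Type*} [LinearOrder α] [TopologicalSpace α]
    [OrderTopology α] [LinearOrder β] [TopologicalSpace β] [OrderTopology β] [DenselyOrdered β]
    {f : α → β} {s : Set α} {t : Set β} [OrdConnected s] [OrdConnected t]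
    (hf : MonotoneOn f s) (hmaps : MapsTo f s t) (hsurj : SurjOn f s t) : ContinuousOn f s := by
  rw [continuousOn_iff_continuous_domRestrict]
  have hcont : Continuous (hmaps.restrict f s t) :=
    Monotone.continuous_of_surjective (fun x y hxy => hf x.2 y.2 hxy)
      (hmaps.restrict_surjective_iff.2 hsurj)
  exact continuous_subtype_val.comp hcont

theorem measureReal_Iic_eq_univ {α : Type*} [MeasurableSpace α] [LinearOrder α] {ν : Measure α}
    {b : α} (hb : ν (Ioi b) = 0) : ν.real (Iic b) = ν.real univ := by
  rw [measureReal_def, measure_congr (ae_eq_univ.2 (by rwa [compl_Iic])), measureReal_def]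

section MeasureIic

variable {ν : Measure ℝ} [IsFiniteMeasure ν]

theorem monotone_measureReal_Iic : Monotone fun t => ν.real (Iic t) :=
  fun _ _ h => measureReal_mono (Iic_subset_Iic.2 h)

theorem le_measureReal_Iic_of_forall_gt {σ t : ℝ} (h : ∀ u > t, σ ≤ ν.real (Iic u)) :
    σ ≤ ν.real (Iic t) := by
  have hInter : ⋂ u > t, Iic u = Iic t := by
    ext x
    simp [forall_gt_imp_ge_iff_le_of_dense]
  have hlim : Tendsto (fun u => ν (Iic u)) (𝓝[>] t) (𝓝 (ν (Iic t))) := by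
    have h := tendsto_measure_biInter_gt (μ := ν) (s := Iic)
      (fun _ _ => measurableSet_Iic.nullMeasurableSet) (fun _ _ _ hij => Iic_subset_Iic.2 hij)
      ⟨t + 1, lt_add_one t, measure_ne_top ν _⟩
    rwa [hInter] at h
  exact ge_of_tendsto ((ENNReal.tendsto_toReal (measure_ne_top ν _)).comp hlim)
    (eventually_nhdsWithin_of_forall h)

theorem strictMonoOn_measureReal_Iic {s : Set ℝ}
    (h : ∀ u ∈ s, ∀ t ∈ s, u < t → 0 < ν (Ioo u t)) :
    StrictMonoOn (fun t => ν.real (Iic t)) s := fun u hu t ht hut =>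
  calc ν.real (Iic u) < ν.real (Iic u) + ν.real (Ioo u t) :=
        lt_add_of_pos_right _ (ENNReal.toReal_pos (h u hu t ht hut).ne' (measure_ne_top ν _))
    _ = ν.real (Iic u ∪ Ioo u t) :=
        (measureReal_union ((Iic_disjoint_Ioi le_rfl).mono_right Ioo_subset_Ioi_self)
          measurableSet_Ioo).symm
    _ ≤ ν.real (Iic t) :=
        measureReal_mono <| union_subset (Iic_subset_Iic.2 hut.le)
          (Ioo_subset_Ioc_self.trans Ioc_subset_Iic_self)

end MeasureIic

/-- The quantile function of `ν`, restricted to `[a, ∞)`: without this restriction the set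
would be all of `ℝ` for `σ ≤ 0`, and its `sInf` the junk value `0`. -/
noncomputable def quantileAbove (ν : Measure ℝ) (a σ : ℝ) : ℝ :=
  sInf {t | a ≤ t ∧ σ ≤ ν.real (Iic t)}

section Quantile

variable {ν : Measure ℝ} {a b σ t : ℝ}

theorem quantileAbove_le (ht : a ≤ t) (hσ : σ ≤ ν.real (Iic t)) : quantileAbove ν a σ ≤ t :=
  csInf_le ⟨a, fun _ hs => hs.1⟩ ⟨ht, hσ⟩

theorem le_quantileAbove (hab : a ≤ b) (hσ : σ ≤ ν.real (Iic b)) : a ≤ quantileAbove ν a σ :=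
  le_csInf ⟨b, hab, hσ⟩ fun _ hs => hs.1

variable [IsFiniteMeasure ν]

theorem le_measureReal_Iic_quantileAbove (hab : a ≤ b) (hσ : σ ≤ ν.real (Iic b)) :
    σ ≤ ν.real (Iic (quantileAbove ν a σ)) := by
  refine le_measureReal_Iic_of_forall_gt fun u hu => ?_
  obtain ⟨s, hs, hsu⟩ := exists_lt_of_csInf_lt
    (s := {t | a ≤ t ∧ σ ≤ ν.real (Iic t)}) ⟨b, hab, hσ⟩ hu
  exact hs.2.trans (monotone_measureReal_Iic hsu.le)

theorem quantileAbove_le_iff (hab : a ≤ b) (hσ : σ ≤ ν.real (Iic b)) (ht : a ≤ t) :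
    quantileAbove ν a σ ≤ t ↔ σ ≤ ν.real (Iic t) :=
  ⟨fun h => (le_measureReal_Iic_quantileAbove hab hσ).trans (monotone_measureReal_Iic h),
    quantileAbove_le ht⟩

theorem monotoneOn_quantileAbove (hab : a ≤ b) :
    MonotoneOn (quantileAbove ν a) (Iic (ν.real (Iic b))) := fun _ _ _ hσ' h =>
  quantileAbove_le (le_quantileAbove hab hσ') (h.trans (le_measureReal_Iic_quantileAbove hab hσ'))

theorem quantileAbove_measureReal_Iic (hF : StrictMonoOn (fun t => ν.real (Iic t)) (Icc a b))
    (ht : t ∈ Icc a b) : quantileAbove ν a (ν.real (Iic t)) = t := by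
  have hab : a ≤ b := ht.1.trans ht.2
  have hσ : ν.real (Iic t) ≤ ν.real (Iic b) := monotone_measureReal_Iic ht.2
  refine (quantileAbove_le ht.1 le_rfl).antisymm (not_lt.1 fun hlt => ?_)
  have hQ : quantileAbove ν a (ν.real (Iic t)) ∈ Icc a b :=
    ⟨le_quantileAbove hab hσ, hlt.le.trans ht.2⟩
  exact (hF hQ ht hlt).not_ge (le_measureReal_Iic_quantileAbove hab hσ)

theorem continuousOn_quantileAbove (hab : a ≤ b)
    (hF : StrictMonoOn (fun t => ν.real (Iic t)) (Icc a b)) :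
    ContinuousOn (quantileAbove ν a) (Icc 0 (ν.real (Iic b))) :=
  ((monotoneOn_quantileAbove hab).mono Icc_subset_Iic_self).continuousOn_of_surjOn
    (t := Icc a b) (fun _ hσ => ⟨le_quantileAbove hab hσ.2, quantileAbove_le hab hσ.2⟩)
    fun t ht => ⟨ν.real (Iic t), ⟨measureReal_nonneg, monotone_measureReal_Iic ht.2⟩,
      quantileAbove_measureReal_Iic hF ht⟩

theorem Icc_inter_setOf_quantileAbove_sub_le (hab : a ≤ b) (hb : ν (Ioi b) = 0) (ht : a ≤ t) :
    Icc 0 (ν.real univ) ∩ {s | quantileAbove ν a (ν.real univ - s) ≤ t} =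
      Icc (ν.real univ - ν.real (Iic t)) (ν.real univ) := by
  have hFt : ν.real (Iic t) ≤ ν.real univ := measureReal_mono (subset_univ _)
  ext s
  refine ⟨fun ⟨hs, hQs⟩ => ?_, fun hs => ?_⟩
  · have hσ : ν.real univ - s ≤ ν.real (Iic b) := by
      rw [measureReal_Iic_eq_univ hb]; linarith [hs.1]
    have := (quantileAbove_le_iff hab hσ ht).1 hQs
    exact ⟨by linarith, hs.2⟩
  · exact ⟨⟨by linarith [hs.1], hs.2⟩, quantileAbove_le ht (by linarith [hs.1])⟩

end Quantile

theorem exists_continuous_antitone_map_volume_eq (ν : Measure ℝ) [IsFiniteMeasure ν] {a b : ℝ}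
    (hab : a ≤ b) (ha : ν (Iio a) = 0) (hb : ν (Ioi b) = 0)
    (hF : StrictMonoOn (fun t => ν.real (Iic t)) (Icc a b)) :
    ∃ g : Icc (0 : ℝ) (ν.real univ) → ℝ, Continuous g ∧ Antitone g ∧
      Measure.map g (Measure.comap Subtype.val volume) = ν := by
  set M := ν.real univ
  have hM : ν.real (Iic b) = M := measureReal_Iic_eq_univ hb
  set Q := quantileAbove ν a
  have hreflect : MapsTo (fun s => M - s) (Icc 0 M) (Icc 0 M) :=
    fun s hs => ⟨by linarith [hs.2], by linarith [hs.1]⟩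
  have hQmono : MonotoneOn Q (Icc 0 M) :=
    hM ▸ (monotoneOn_quantileAbove hab).mono Icc_subset_Iic_self
  have hg : Continuous fun s : Icc 0 M => Q (M - s) :=
    (hM ▸ continuousOn_quantileAbove hab hF).comp_continuous (by fun_prop) fun s => hreflect s.2
  refine ⟨fun s => Q (M - s), hg, fun s s' h => ?_, ?_⟩
  · exact hQmono (hreflect s'.2) (hreflect s.2) (sub_le_sub_left (Subtype.coe_le_coe.2 h) M)
  refine (Measure.ext_of_Iic ν _ fun t => ?_).symm
  rw [Measure.map_apply hg.measurable measurableSet_Iic,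
    (MeasurableEmbedding.subtype_coe measurableSet_Icc).comap_apply,
    show Subtype.val '' ((fun s : Icc 0 M => Q (M - s)) ⁻¹' Iic t) =
      Icc 0 M ∩ {s | Q (M - s) ≤ t} from Subtype.image_preimage_coe _ {s | Q (M - s) ≤ t}]
  rcases lt_or_ge t a with hta | hat
  · have hempty : Icc 0 M ∩ {s | Q (M - s) ≤ t} = ∅ :=
      eq_empty_of_forall_notMem fun s ⟨hs, hQs⟩ =>
        hQs.not_gt (hta.trans_le (le_quantileAbove hab (hM ▸ (hreflect hs).2)))
    rw [hempty, measure_empty, measure_mono_null (Iic_subset_Iio.2 hta) ha]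
  · rw [Icc_inter_setOf_quantileAbove_sub_le hab hb hat, Real.volume_Icc, sub_sub_cancel,
      measureReal_def, ENNReal.ofReal_toReal (measure_ne_top ν _)]

theorem stmt9_general {X : Type*} [TopologicalSpace X] [CompactSpace X] [ConnectedSpace X]
    [MeasurableSpace X] [BorelSpace X] (μ : Measure X) [IsFiniteMeasure μ]
    (hopen : ∀ U : Set X, IsOpen U → U.Nonempty → 0 < μ U)
    (ξ : X → ℝ) (hξ : Continuous ξ) :
    ∃ g : (Set.Icc (0 : ℝ) (μ Set.univ).toReal) → ℝ,
      Continuous g ∧ Antitone g ∧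
      Measure.map g (MeasureTheory.Measure.comap Subtype.val MeasureTheory.volume) =
        Measure.map ξ μ := by
  obtain ⟨x₀, -, hx₀⟩ := isCompact_univ.exists_isMinOn univ_nonempty hξ.continuousOn
  obtain ⟨x₁, -, hx₁⟩ := isCompact_univ.exists_isMaxOn univ_nonempty hξ.continuousOn
  rw [isMinOn_univ_iff] at hx₀
  rw [isMaxOn_univ_iff] at hx₁
  have hmap : ∀ s, MeasurableSet s → μ.map ξ s = μ (ξ ⁻¹' s) :=
    fun s hs => Measure.map_apply hξ.measurable hs
  have ha : μ.map ξ (Iio (ξ x₀)) = 0 := by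
    have hempty : ξ ⁻¹' Iio (ξ x₀) = ∅ :=
      eq_empty_of_forall_notMem fun x hx => (hx₀ x).not_gt hx
    rw [hmap _ measurableSet_Iio, hempty, measure_empty]
  have hb : μ.map ξ (Ioi (ξ x₁)) = 0 := by
    have hempty : ξ ⁻¹' Ioi (ξ x₁) = ∅ :=
      eq_empty_of_forall_notMem fun x hx => (hx₁ x).not_gt hx
    rw [hmap _ measurableSet_Ioi, hempty, measure_empty]
  have hpos : ∀ u ∈ Icc (ξ x₀) (ξ x₁), ∀ t ∈ Icc (ξ x₀) (ξ x₁), u < t →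
      0 < μ.map ξ (Ioo u t) := by
    intro u hu t ht hut
    obtain ⟨x, hx⟩ := intermediate_value_univ x₀ x₁ hξ
      (⟨by linarith [hu.1], by linarith [ht.2]⟩ : (u + t) / 2 ∈ Icc (ξ x₀) (ξ x₁))
    rw [hmap _ measurableSet_Ioo]
    exact hopen _ (isOpen_Ioo.preimage hξ) ⟨x, by rw [mem_preimage, hx]; constructor <;> linarith⟩
  have key := exists_continuous_antitone_map_volume_eq (μ.map ξ) (hx₀ x₁) ha hb
    (strictMonoOn_measureReal_Iic hpos)
  rwa [measureReal_def, hmap _ MeasurableSet.univ, preimage_univ] at key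

/-- Lemmas 5.5–5.7: on a compact connected space with a finite Borel measure that is
positive on nonempty open sets, every continuous `ξ : X → ℝ` has a continuous
nonincreasing "decreasing rearrangement" `ξ⋆ : [0, μ(X)] → ℝ` equidistributed with `ξ`
(the pushforward of Lebesgue measure on `[0, μ(X)]` under `ξ⋆` equals the pushforward
of `μ` under `ξ`). -/
theorem stmt9 {X : Type*} [TopologicalSpace X] [CompactSpace X] [ConnectedSpace X]
    [MeasurableSpace X] [BorelSpace X] (μ : Measure X) [IsFiniteMeasure μ]
    (hpos : 0 < μ Set.univ)
    (hopen : ∀ U : Set X, IsOpen U → U.Nonempty → 0 < μ U)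
    (ξ : X → ℝ) (hξ : Continuous ξ) :
    ∃ g : (Set.Icc (0 : ℝ) (μ Set.univ).toReal) → ℝ,
      Continuous g ∧ Antitone g ∧
      Measure.map g (MeasureTheory.Measure.comap Subtype.val MeasureTheory.volume) =
        Measure.map ξ μ :=
  stmt9_general μ hopen ξ hξ
end

section
/- Let (X, μ) be a finite nonatomic measure space, let φ₀ ∈ L¹(X, μ) be bounded below, and let ψ₀ ∈ L^∞(X, μ). Suppose φ, φ' ∈ L¹(X, μ) are each equidistributed with φ₀ and ψ, ψ' ∈ L^∞(X, μ) are each equidistributed with ψ₀, and suppose φ is similarly ordered with ψ and φ' is similarly ordered with ψ'. Then ∫_X φ ψ dμ = ∫_X φ' ψ' dμ. -/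
/-!
Sublevel sets of similarly ordered functions are nested, so the joint law of `(φ, ψ)` gives each
box `Iic a ×ˢ Iic b` the mass `min (μ {φ ≤ a}) (μ {ψ ≤ b})`, which depends only on the marginal
laws. Boxes form a generating π-system of `ℝ × ℝ`, hence `(φ, ψ)` and `(φ', ψ')` have the same
joint law, and `∫ φ ψ` is the integral of `p.1 * p.2` against it.
-/

open MeasureTheory Set ProbabilityTheory

def SimilarlyOrdered {X : Type*} (φ ψ : X → ℝ) : Prop :=
  ∀ x y, 0 ≤ (φ x - φ y) * (ψ x - ψ y)

namespace SimilarlyOrdered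

variable {X : Type*} {φ ψ : X → ℝ}

theorem setOf_le_subset_or (hso : SimilarlyOrdered φ ψ) (a b : ℝ) :
    {x | φ x ≤ a} ⊆ {x | ψ x ≤ b} ∨ {x | ψ x ≤ b} ⊆ {x | φ x ≤ a} := by
  by_contra! h
  simp only [not_subset, mem_ofPred_eq, not_le] at h
  obtain ⟨⟨x, hxa, hxb⟩, y, hyb, hya⟩ := h
  nlinarith [hso x y]

theorem measure_setOf_le_inter [MeasurableSpace X] (hso : SimilarlyOrdered φ ψ)
    (μ : Measure X) (a b : ℝ) :
    μ ({x | φ x ≤ a} ∩ {x | ψ x ≤ b}) = min (μ {x | φ x ≤ a}) (μ {x | ψ x ≤ b}) := by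
  rcases hso.setOf_le_subset_or a b with h | h
  · rw [inter_eq_left.2 h, min_eq_left (measure_mono h)]
  · rw [inter_eq_right.2 h, min_eq_right (measure_mono h)]

end SimilarlyOrdered

theorem Real.isCountablySpanning_range_Iic : IsCountablySpanning (range (Iic : ℝ → Set ℝ)) :=
  ⟨fun n : ℕ => Iic (n : ℝ), fun _ => mem_range_self _,
    iUnion_eq_univ_iff.2 fun x => (exists_nat_ge x).imp fun _ hn => hn⟩

theorem Real.measurableSpace_prod_eq_generateFrom_Iic_prod_Iic :
    (inferInstance : MeasurableSpace (ℝ × ℝ)) =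
      MeasurableSpace.generateFrom (image2 (· ×ˢ ·) (range Iic) (range Iic)) := by
  have hℝ : Real.measurableSpace = MeasurableSpace.generateFrom (range Iic) :=
    BorelSpace.measurable_eq.trans (borel_eq_generateFrom_Iic ℝ)
  change MeasurableSpace.prod _ _ = _
  rw [hℝ]
  exact generateFrom_prod_eq Real.isCountablySpanning_range_Iic
    Real.isCountablySpanning_range_Iic

theorem Real.measure_prod_ext_of_Iic_prod_Iic (μ ν : Measure (ℝ × ℝ)) [IsFiniteMeasure μ]
    (h : ∀ a b, μ (Iic a ×ˢ Iic b) = ν (Iic a ×ˢ Iic b)) : μ = ν := by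
  refine ext_of_generate_finite _ Real.measurableSpace_prod_eq_generateFrom_Iic_prod_Iic
    ?_ ?_ ?_
  · rintro _ ⟨_, ⟨a, rfl⟩, _, ⟨b, rfl⟩, rfl⟩ _ ⟨_, ⟨a', rfl⟩, _, ⟨b', rfl⟩, rfl⟩ -
    exact ⟨_, mem_range_self (min a a'), _, mem_range_self (min b b'),
      by rw [prod_inter_prod, Iic_inter_Iic, Iic_inter_Iic]⟩
  · rintro _ ⟨_, ⟨a, rfl⟩, _, ⟨b, rfl⟩, rfl⟩
    exact h a b
  · have hmono : Monotone fun a : ℝ => Iic a ×ˢ Iic a :=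
      fun _ _ hab => prod_mono (Iic_subset_Iic.2 hab) (Iic_subset_Iic.2 hab)
    have hunion : ⋃ a : ℝ, Iic a ×ˢ Iic a = univ := by
      rw [iUnion_prod_of_monotone monotone_Iic monotone_Iic, iUnion_Iic, univ_prod_univ]
    rw [← hunion, hmono.measure_iUnion, hmono.measure_iUnion]
    simp only [h]

theorem SimilarlyOrdered.identDistrib_prodMk {X : Type*} [MeasurableSpace X] {μ : Measure X}
    [IsFiniteMeasure μ] {φ ψ φ' ψ' : X → ℝ} (hso : SimilarlyOrdered φ ψ)
    (hso' : SimilarlyOrdered φ' ψ') (hφ : IdentDistrib φ φ' μ μ) (hψ : IdentDistrib ψ ψ' μ μ) :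
    IdentDistrib (fun x => (φ x, ψ x)) (fun x => (φ' x, ψ' x)) μ μ where
  aemeasurable_fst := hφ.aemeasurable_fst.prodMk hψ.aemeasurable_fst
  aemeasurable_snd := hφ.aemeasurable_snd.prodMk hψ.aemeasurable_snd
  map_eq := by
    refine Real.measure_prod_ext_of_Iic_prod_Iic _ _ fun a b => ?_
    have hbox : MeasurableSet (Iic a ×ˢ Iic b) := measurableSet_Iic.prod measurableSet_Iic
    rw [Measure.map_apply_of_aemeasurable (hφ.aemeasurable_fst.prodMk hψ.aemeasurable_fst) hbox,
      Measure.map_apply_of_aemeasurable (hφ.aemeasurable_snd.prodMk hψ.aemeasurable_snd) hbox]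
    change μ ({x | φ x ≤ a} ∩ {x | ψ x ≤ b}) = μ ({x | φ' x ≤ a} ∩ {x | ψ' x ≤ b})
    rw [hso.measure_setOf_le_inter, hso'.measure_setOf_le_inter]
    exact congr_arg₂ min (hφ.measure_mem_eq measurableSet_Iic)
      (hψ.measure_mem_eq measurableSet_Iic)

theorem stmt12_general {X : Type*} [MeasurableSpace X] (μ : Measure X) [IsFiniteMeasure μ]
    (φ₀ : X → ℝ)
    (ψ₀ : X → ℝ)
    (φ φ' : X → ℝ) (hφ : Measurable φ) (hφ' : Measurable φ')
    (hφd : Measure.map φ μ = Measure.map φ₀ μ)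
    (hφ'd : Measure.map φ' μ = Measure.map φ₀ μ)
    (ψ ψ' : X → ℝ) (hψ : Measurable ψ) (hψ' : Measurable ψ')
    (hψd : Measure.map ψ μ = Measure.map ψ₀ μ)
    (hψ'd : Measure.map ψ' μ = Measure.map ψ₀ μ)
    (hso : SimilarlyOrdered φ ψ) (hso' : SimilarlyOrdered φ' ψ') :
    ∫ x, φ x * ψ x ∂μ = ∫ x, φ' x * ψ' x ∂μ := by
  have hφφ' : IdentDistrib φ φ' μ μ := ⟨hφ.aemeasurable, hφ'.aemeasurable, hφd.trans hφ'd.symm⟩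
  have hψψ' : IdentDistrib ψ ψ' μ μ := ⟨hψ.aemeasurable, hψ'.aemeasurable, hψd.trans hψ'd.symm⟩
  exact ((hso.identDistrib_prodMk hso' hφφ' hψψ').comp
    (measurable_fst.mul measurable_snd)).integral_eq

/-- Lemma 7.2(c): `∫ φ ψ` is independent of the choice of `φ ∼ φ₀` and `ψ ∼ ψ₀`, as
long as `φ, ψ` are similarly ordered. -/
theorem stmt12 {X : Type*} [MeasurableSpace X] (μ : Measure X) [IsFiniteMeasure μ]
    (hμ : Nonatomic μ)
    (φ₀ : X → ℝ) (hφm : Measurable φ₀) (hφi : Integrable φ₀ μ)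
    (c : ℝ) (hφbdd : ∀ x, c ≤ φ₀ x)
    (ψ₀ : X → ℝ) (hψm : Measurable ψ₀) (C : ℝ) (hψb : ∀ x, |ψ₀ x| ≤ C)
    (φ φ' : X → ℝ) (hφ : Measurable φ) (hφ' : Measurable φ')
    (hφd : Measure.map φ μ = Measure.map φ₀ μ)
    (hφ'd : Measure.map φ' μ = Measure.map φ₀ μ)
    (ψ ψ' : X → ℝ) (hψ : Measurable ψ) (hψ' : Measurable ψ')
    (hψd : Measure.map ψ μ = Measure.map ψ₀ μ)
    (hψ'd : Measure.map ψ' μ = Measure.map ψ₀ μ)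
    (hso : SimilarlyOrdered φ ψ) (hso' : SimilarlyOrdered φ' ψ') :
    ∫ x, φ x * ψ x ∂μ = ∫ x, φ' x * ψ' x ∂μ :=
  stmt12_general μ φ₀ ψ₀ φ φ' hφ hφ' hφd hφ'd ψ ψ' hψ hψ' hψd hψ'd hso hso'
end

section
/- Let n ≥ 2. There exists a function t from the space of real quadratic forms on ℝ^{2n} to ℝ such that: (i) t(Q ∘ g) = t(Q) for every quadratic form Q on ℝ^{2n} and every matrix g in the symplectic group Sp(2n, ℝ) = { g ∈ GL(2n, ℝ) : gᵀ J g = J }, where J is the standard symplectic matrix and Q ∘ g denotes the quadratic form x ↦ Q(g x); and (ii) t is not invariant under the special linear group: there exist a quadratic form Q₀ on ℝ^{2n} and a matrix h ∈ SL(2n, ℝ) with t(Q₀ ∘ h) ≠ t(Q₀). -/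
open Matrix

/-!
A quadratic form `Q` with matrix `M` has Hamiltonian matrix `J M`. If `gᵀ J g = J` then
`J gᵀ = g⁻¹ J`, so replacing `Q` by `Q ∘ g` conjugates `J M` by `g`, and `tr ((J M)²)` is
invariant under the symplectic group. It is not invariant under `SL(2n, ℝ)`: for
`Q₀ = x₀² + y₀²` it equals `-2`, and after the diagonal rescaling `x₀ ↦ 2 x₀`, `y₁ ↦ y₁ / 2`
(determinant one, but stretching the conjugate pair `(x₀, y₀)` by `2`) it equals `-8`.
-/

theorem Matrix.toQuadraticForm'_comp_toLin' {m n R : Type*} [Fintype m] [DecidableEq m]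
    [Fintype n] [DecidableEq n] [CommRing R] (M : Matrix m m R) (A : Matrix m n R) :
    M.toQuadraticForm'.comp (toLin' A) = (Aᵀ * M * A).toQuadraticForm' := by
  ext x
  simp only [toQuadraticForm', QuadraticMap.comp_apply, LinearMap.BilinMap.toQuadraticMap_apply,
    toLin'_apply, toLinearMap₂'_apply']
  rw [← mulVec_mulVec, ← mulVec_mulVec, dotProduct_mulVec x Aᵀ, vecMul_transpose]

theorem Matrix.IsSymm.toMatrix'_toQuadraticForm' {n R : Type*} [Fintype n] [DecidableEq n]
    [CommRing R] [Invertible (2 : R)] {M : Matrix n n R} (hM : M.IsSymm) :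
    M.toQuadraticForm'.toMatrix' = M := by
  rw [QuadraticForm.toMatrix', toQuadraticForm', QuadraticMap.associated_left_inverse,
    LinearMap.toMatrix'_toLinearMap₂']
  intro x y
  rw [toLinearMap₂'_apply', toLinearMap₂'_apply', dotProduct_comm, dotProduct_mulVec,
    ← mulVec_transpose, hM.eq]

theorem Matrix.trace_sq_J_mul_diagonal {l R : Type*} [Fintype l] [DecidableEq l] [CommRing R]
    (d : l ⊕ l → R) :
    trace ((J l R * diagonal d) ^ 2) = -2 * ∑ i, d (Sum.inl i) * d (Sum.inr i) := by
  obtain ⟨d₁, d₂, rfl⟩ : ∃ d₁ d₂, d = Sum.elim d₁ d₂ := ⟨_, _, (Sum.elim_comp_inl_inr d).symm⟩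
  rw [← fromBlocks_diagonal, J, sq, fromBlocks_multiply, fromBlocks_multiply]
  simp [trace, Fintype.sum_sum_type, mul_comm (d₂ _)]
  ring

namespace SymplecticGroup

variable {l R : Type*} [Fintype l] [DecidableEq l] [CommRing R] {A : Matrix (l ⊕ l) (l ⊕ l) R}

theorem J_mul_transpose (hA : A ∈ symplecticGroup l R) : J l R * Aᵀ = A⁻¹ * J l R := by
  rw [inv_eq_symplectic_inv A hA, Matrix.mul_assoc, J_squared]
  simp

theorem trace_pow_J_mul_transpose_mul_mul (hA : A ∈ symplecticGroup l R)
    (M : Matrix (l ⊕ l) (l ⊕ l) R) (k : ℕ) :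
    trace ((J l R * (Aᵀ * M * A)) ^ k) = trace ((J l R * M) ^ k) := by
  have hunit : IsUnit A := (isUnit_iff_isUnit_det A).mpr (symplectic_det hA)
  have hconj : J l R * (Aᵀ * M * A) = A⁻¹ * (J l R * M) * A := by
    simp only [← Matrix.mul_assoc, J_mul_transpose hA]
  rw [hconj, ← hunit.unit_spec, ← coe_units_inv, Units.conj_pow', trace_units_conj']

end SymplecticGroup

namespace QuadraticMap

variable {l R : Type*} [Fintype l] [DecidableEq l] [CommRing R] [Invertible (2 : R)]

/-- Mathlib's `J l R = [[0, -1], [1, 0]]` is the negative of the `J` of the statement; the sign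
changes neither the symplectic group nor this invariant. -/
noncomputable def hamiltonianTraceSq (Q : QuadraticForm R (l ⊕ l → R)) : R :=
  trace ((J l R * Q.toMatrix') ^ 2)

theorem hamiltonianTraceSq_comp_toLin' {A : Matrix (l ⊕ l) (l ⊕ l) R}
    (hA : A ∈ symplecticGroup l R) (Q : QuadraticForm R (l ⊕ l → R)) :
    (Q.comp (toLin' A)).hamiltonianTraceSq = Q.hamiltonianTraceSq := by
  rw [hamiltonianTraceSq, hamiltonianTraceSq, QuadraticForm.toMatrix'_comp,
    LinearMap.toMatrix'_toLin', SymplecticGroup.trace_pow_J_mul_transpose_mul_mul hA]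

theorem hamiltonianTraceSq_toQuadraticForm'_diagonal (d : l ⊕ l → R) :
    (diagonal d).toQuadraticForm'.hamiltonianTraceSq =
      -2 * ∑ i, d (Sum.inl i) * d (Sum.inr i) := by
  rw [hamiltonianTraceSq, (isSymm_diagonal d).toMatrix'_toQuadraticForm', trace_sq_J_mul_diagonal]

theorem exists_det_eq_one_hamiltonianTraceSq_comp_toLin'_ne {i₀ i₁ : l} (hi : i₀ ≠ i₁) :
    ∃ (Q₀ : QuadraticForm ℝ (l ⊕ l → ℝ)) (h : Matrix (l ⊕ l) (l ⊕ l) ℝ),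
      h.det = 1 ∧ (Q₀.comp (toLin' h)).hamiltonianTraceSq ≠ Q₀.hamiltonianTraceSq := by
  let e : l → ℝ := Pi.single i₀ 1
  let s : l ⊕ l → ℝ := Sum.elim (Function.update 1 i₀ 2) (Function.update 1 i₁ 2⁻¹)
  refine ⟨(diagonal (Sum.elim e e)).toQuadraticForm', diagonal s, ?_, ?_⟩
  · simp [s, det_diagonal, Finset.prod_update_of_mem]
  · rw [toQuadraticForm'_comp_toLin', diagonal_transpose, diagonal_mul_diagonal,
      diagonal_mul_diagonal, hamiltonianTraceSq_toQuadraticForm'_diagonal,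
      hamiltonianTraceSq_toQuadraticForm'_diagonal]
    simp [e, s, Pi.single_apply, hi]
    norm_num

end QuadraticMap

/-- Theorem 1.5 (linear-algebra core, Section 8): for `n ≥ 2` there is a function `t`
on quadratic forms on `ℝ^{2n}` (coordinates indexed by `Fin n ⊕ Fin n`) that is
invariant under composition with symplectic matrices (`gᵀ J g = J`, where
`J = [[0, I], [−I, 0]]`) but not under composition with all matrices of determinant
one. -/
theorem stmt15 (n : ℕ) (hn : 2 ≤ n) :
    ∃ t : QuadraticForm ℝ ((Fin n ⊕ Fin n) → ℝ) → ℝ,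
      (∀ (Q : QuadraticForm ℝ ((Fin n ⊕ Fin n) → ℝ))
          (g : Matrix (Fin n ⊕ Fin n) (Fin n ⊕ Fin n) ℝ),
          gᵀ * (Matrix.fromBlocks 0 1 (-1) 0) * g = Matrix.fromBlocks 0 1 (-1) 0 →
          t (Q.comp (Matrix.toLin' g)) = t Q) ∧
      (∃ (Q₀ : QuadraticForm ℝ ((Fin n ⊕ Fin n) → ℝ))
          (h : Matrix (Fin n ⊕ Fin n) (Fin n ⊕ Fin n) ℝ),
          h.det = 1 ∧ t (Q₀.comp (Matrix.toLin' h)) ≠ t Q₀) := by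
  have hJ : (fromBlocks 0 1 (-1) 0 : Matrix (Fin n ⊕ Fin n) (Fin n ⊕ Fin n) ℝ) = -J (Fin n) ℝ := by
    simp [J, fromBlocks_neg]
  refine ⟨QuadraticMap.hamiltonianTraceSq, fun Q g hg => ?_, ?_⟩
  · have hg_mem : g ∈ symplecticGroup (Fin n) ℝ := by
      rw [SymplecticGroup.mem_iff']
      simpa [hJ] using hg
    exact QuadraticMap.hamiltonianTraceSq_comp_toLin' hg_mem Q
  · exact QuadraticMap.exists_det_eq_one_hamiltonianTraceSq_comp_toLin'_ne
      (i₀ := ⟨0, by omega⟩) (i₁ := ⟨1, by omega⟩) (by simp)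
end
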